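/- Let A = (A_1,…,A_n) be a commuting tuple of linear operators on a finite-dimensional complex vector space V, and let V(0) := ∪_{i_1,…,i_n} Ker(A_1^{i_1}) ∩ … ∩ Ker(A_n^{i_n}) be the joint generalized eigenspace at 0. Then H_k(A,V) ≅ H_k(A,V(0)) for all k ∈ {0,…,n}; moreover H_n(A,V(0)) ≅ ∩_{i=1}^n Ker(A_i), and this space is nonzero if and only if V(0) ≠ {0}. -/

import Mathlib

open Filter Topology
namespace KN
variable {V : Type*} [AddCommGroup V] [Module ℂ V]

noncomputable def koszulD {n : ℕ} (A : Fin n → Module.End ℂ V) (k : ℕ) :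
    ({s : Finset (Fin n) // s.card = k + 1} → V) →ₗ[ℂ]
      ({s : Finset (Fin n) // s.card = k} → V) where
  toFun f s := ∑ j ∈ (s : Finset (Fin n))ᶜ.attach,
    ((-1 : ℂ) ^ ((s : Finset (Fin n)).filter (· < (j : Fin n))).card) •
      A (j : Fin n) (f ⟨insert (j : Fin n) (s : Finset (Fin n)), by
        rw [Finset.card_insert_of_notMem (Finset.mem_compl.mp j.2), s.2]⟩)
  map_add' f g := by
    funext s
    simp [Pi.add_apply, map_add, smul_add, Finset.sum_add_distrib]
  map_smul' c f := by
    funext s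
    simp only [Pi.smul_apply, map_smul, RingHom.id_apply, Finset.smul_sum]
    exact Finset.sum_congr rfl fun j _ => smul_comm _ _ _

noncomputable def koszulDDown {n : ℕ} (A : Fin n → Module.End ℂ V) :
    (k : ℕ) → (({s : Finset (Fin n) // s.card = k} → V) →ₗ[ℂ]
      ({s : Finset (Fin n) // s.card = k - 1} → V))
  | 0 => 0
  | (k + 1) => koszulD A k

noncomputable abbrev koszulHomology {n : ℕ} (A : Fin n → Module.End ℂ V) (k : ℕ) :=
  LinearMap.ker (koszulDDown A k) ⧸
    (Submodule.comap (LinearMap.ker (koszulDDown A k)).subtype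
      (LinearMap.range (koszulD A k)))


/-- A commuting tuple is Fredholm when all its Koszul homology groups are finite
dimensional. -/
def KoszulFredholm {n : ℕ} (A : Fin n → Module.End ℂ V) : Prop :=
  ∀ k, FiniteDimensional ℂ (koszulHomology A k)

/-- The index of a Fredholm commuting tuple: minus the Euler characteristic of its
Koszul complex. -/
noncomputable def koszulIndex {n : ℕ} (A : Fin n → Module.End ℂ V) : ℤ :=
  ∑ k ∈ Finset.range (n + 1),
    (-1) ^ (k + 1) * (Module.finrank ℂ (koszulHomology A k) : ℤ)

/-- The tuple `A - λ`. -/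
noncomputable def tupleSub {n : ℕ} (A : Fin n → Module.End ℂ V) (lam : Fin n → ℂ) :
    Fin n → Module.End ℂ V :=
  fun i => A i - algebraMap ℂ (Module.End ℂ V) (lam i)

/-- The tuple `λ - A`. -/
noncomputable def subTuple {n : ℕ} (lam : Fin n → ℂ) (A : Fin n → Module.End ℂ V) :
    Fin n → Module.End ℂ V :=
  fun i => algebraMap ℂ (Module.End ℂ V) (lam i) - A i

/-- The Taylor spectrum of a commuting tuple: those `λ` for which the Koszul complex of
`A - λ` is not exact. -/
def taylorSpectrum {n : ℕ} (A : Fin n → Module.End ℂ V) : Set (Fin n → ℂ) :=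
  {lam | ∃ k, Nontrivial (koszulHomology (tupleSub A lam) k)}

lemma compLeft_koszulD {n : ℕ} (A : Fin n → Module.End ℂ V) (T : Module.End ℂ V)
    (hT : ∀ i, Commute T (A i)) (k : ℕ) :
    (T.compLeft {s : Finset (Fin n) // s.card = k}).comp (koszulD A k)
      = (koszulD A k).comp (T.compLeft _) := by
  have hpt : ∀ (i : Fin n) (y : V), T (A i y) = A i (T y) := fun i y => by
    have h := LinearMap.congr_fun ((hT i).eq) y
    simpa [Module.End.mul_apply] using h
  ext f s
  simp only [LinearMap.comp_apply, LinearMap.compLeft_apply, Function.comp_apply, koszulD,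
    LinearMap.coe_mk, AddHom.coe_mk, map_sum, map_smul]
  exact Finset.sum_congr rfl fun j _ => by rw [hpt]

lemma compLeft_koszulDDown {n : ℕ} (A : Fin n → Module.End ℂ V) (T : Module.End ℂ V)
    (hT : ∀ i, Commute T (A i)) (k : ℕ) :
    (T.compLeft {s : Finset (Fin n) // s.card = k - 1}).comp (koszulDDown A k)
      = (koszulDDown A k).comp (T.compLeft _) := by
  cases k with
  | zero => ext f s; simp [koszulDDown]
  | succ k => exact compLeft_koszulD A T hT k

open Classical in
/-- The endomorphism of Koszul homology induced by an operator `T` commuting with the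
tuple `A` (junk value `0` if `T` does not commute with `A`). -/
noncomputable def koszulInduced {n : ℕ} (A : Fin n → Module.End ℂ V) (T : Module.End ℂ V)
    (k : ℕ) : Module.End ℂ (koszulHomology A k) :=
  if hT : ∀ i, Commute T (A i) then
    Submodule.mapQ _ _
      ((T.compLeft _).restrict (p := LinearMap.ker (koszulDDown A k))
        (q := LinearMap.ker (koszulDDown A k))
        (fun x hx => by
          have h := LinearMap.congr_fun (compLeft_koszulDDown A T hT k) x
          simp only [LinearMap.comp_apply] at h
          simp only [LinearMap.mem_ker] at hx ⊢
          rw [← h, hx, map_zero]))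
      (fun x hx => by
        simp only [Submodule.mem_comap, LinearMap.mem_range] at hx ⊢
        obtain ⟨y, hy⟩ := hx
        refine ⟨(T.compLeft _) y, ?_⟩
        have h := LinearMap.congr_fun (compLeft_koszulD A T hT k) y
        simp only [LinearMap.comp_apply] at h
        rw [← h, hy]
        rfl)
  else 0

/-- The tuple induced by `A` on the Koszul homology of `B`. -/
noncomputable def inducedTuple {n m : ℕ} (B : Fin m → Module.End ℂ V)
    (A : Fin n → Module.End ℂ V) (k : ℕ) : Fin n → Module.End ℂ (koszulHomology B k) :=
  fun i => koszulInduced B (A i) k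

/-- The generalized eigenspace of an endomorphism at `μ`: the union of the kernels of the
powers of `T - μ`. -/
noncomputable def maxGenEig (T : Module.End ℂ V) (mu : ℂ) : Submodule ℂ V :=
  ⨆ k : ℕ, LinearMap.ker ((T - algebraMap ℂ (Module.End ℂ V) mu) ^ k)

/-- The joint generalized eigenspace of a tuple of endomorphisms at `λ`. -/
noncomputable def jointGenEig {n : ℕ} (T : Fin n → Module.End ℂ V) (lam : Fin n → ℂ) :
    Submodule ℂ V :=
  ⨅ i, maxGenEig (T i) (lam i)

/-- The local index at `λ` of a Fredholm commuting tuple `B` (in the intended application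
`B = g(A)`) with respect to the "coordinate" tuple `A`: minus the Euler characteristic of
the joint generalized eigenspaces at `λ`, inside the Koszul homology of `B`, of the tuple
induced by `A`. -/
noncomputable def localIndex {n m : ℕ} (B : Fin m → Module.End ℂ V)
    (A : Fin n → Module.End ℂ V) (lam : Fin n → ℂ) : ℤ :=
  ∑ k ∈ Finset.range (m + 1), (-1) ^ (k + 1) *
    (Module.finrank ℂ (jointGenEig (inducedTuple B A k) lam) : ℤ)

open Classical in
/-- The restriction of an endomorphism to an invariant submodule (junk value `0` if the
submodule is not invariant). -/
noncomputable def restrictEnd (p : Submodule ℂ V) (T : Module.End ℂ V) :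
    Module.End ℂ ↥p :=
  if h : ∀ x ∈ p, T x ∈ p then T.restrict h else 0

/-- The set of common zeroes of a family of functions inside a set `S`. -/
def zeroSetOn {n m : ℕ} (S : Set (Fin n → ℂ)) (g : Fin m → ((Fin n → ℂ) → ℂ)) :
    Set (Fin n → ℂ) :=
  {x ∈ S | ∀ j, g j x = 0}

section Hilbert

variable {H : Type*} [NormedAddCommGroup H] [InnerProductSpace ℂ H] [CompleteSpace H]

/-- The tuple of underlying linear endomorphisms of a tuple of bounded operators. -/
noncomputable def opEnd {n : ℕ} (A : Fin n → (H →L[ℂ] H)) : Fin n → Module.End ℂ H :=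
  fun i => (A i).toLinearMap

/-- The Taylor spectrum of a commuting tuple of bounded operators. -/
def opTaylorSpectrum {n : ℕ} (A : Fin n → (H →L[ℂ] H)) : Set (Fin n → ℂ) :=
  taylorSpectrum (opEnd A)

/-- The essential Taylor spectrum: `λ ∉ Sp_ess(A)` if and only if `A - λ` is Fredholm. -/
def essSpectrum {n : ℕ} (A : Fin n → (H →L[ℂ] H)) : Set (Fin n → ℂ) :=
  {lam | ¬ KoszulFredholm (tupleSub (opEnd A) lam)}

/-- Taylor's holomorphic functional calculus for a commuting tuple `A` of bounded
operators on a Hilbert space, with symbols holomorphic on an open neighbourhood `U` of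
the Taylor spectrum: a unital algebra homomorphism `f ↦ f(A)` into the commutant of `A`,
sending the coordinate functions to the members of `A` and satisfying the spectral
mapping property `Sp(f(A)) = f(Sp(A))` for tuple-valued symbols. -/
structure OpCalculus {n : ℕ} (A : Fin n → (H →L[ℂ] H)) (U : Set (Fin n → ℂ)) :
    Type _ where
  toFun : ((Fin n → ℂ) → ℂ) → (H →L[ℂ] H)
  isOpen_dom : IsOpen U
  spec_sub : opTaylorSpectrum A ⊆ U
  map_one' : toFun 1 = 1
  map_add' : ∀ f g, DifferentiableOn ℂ f U → DifferentiableOn ℂ g U →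
    toFun (f + g) = toFun f + toFun g
  map_mul' : ∀ f g, DifferentiableOn ℂ f U → DifferentiableOn ℂ g U →
    toFun (f * g) = toFun f * toFun g
  map_smul' : ∀ (c : ℂ) f, DifferentiableOn ℂ f U → toFun (c • f) = c • toFun f
  map_coord : ∀ i, toFun (fun z => z i) = A i
  commutes : ∀ f, DifferentiableOn ℂ f U → ∀ i, Commute (A i) (toFun f)
  spectral_mapping : ∀ (m : ℕ) (h : Fin m → ((Fin n → ℂ) → ℂ)),
    (∀ j, DifferentiableOn ℂ (h j) U) →
    opTaylorSpectrum (fun j => toFun (h j)) = (fun z j => h j z) '' opTaylorSpectrum A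

end Hilbert

/-- A holomorphic functional calculus for a commuting tuple of endomorphisms of a complex
vector space (used for tuples acting on finite dimensional homology spaces). -/
structure EndCalculus {n : ℕ} {V : Type*} [AddCommGroup V] [Module ℂ V]
    (A : Fin n → Module.End ℂ V) (U : Set (Fin n → ℂ)) : Type _ where
  toFun : ((Fin n → ℂ) → ℂ) → Module.End ℂ V
  isOpen_dom : IsOpen U
  spec_sub : taylorSpectrum A ⊆ U
  map_one' : toFun 1 = 1
  map_add' : ∀ f g, DifferentiableOn ℂ f U → DifferentiableOn ℂ g U →
    toFun (f + g) = toFun f + toFun g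
  map_mul' : ∀ f g, DifferentiableOn ℂ f U → DifferentiableOn ℂ g U →
    toFun (f * g) = toFun f * toFun g
  map_smul' : ∀ (c : ℂ) f, DifferentiableOn ℂ f U → toFun (c • f) = c • toFun f
  map_coord : ∀ i, toFun (fun z => z i) = A i
  commutes : ∀ f, DifferentiableOn ℂ f U → ∀ i, Commute (A i) (toFun f)
  spectral_mapping : ∀ (m : ℕ) (h : Fin m → ((Fin n → ℂ) → ℂ)),
    (∀ j, DifferentiableOn ℂ (h j) U) →
    taylorSpectrum (fun j => toFun (h j)) = (fun z j => h j z) '' taylorSpectrum A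



noncomputable instance germAlgebra {α : Type*} {l : Filter α} : Algebra ℂ (Filter.Germ l ℂ) :=
  Algebra.ofModule
    (fun c x y => by
      refine Filter.Germ.inductionOn₂ x y fun f g => ?_
      simp only [← Filter.Germ.coe_smul, ← Filter.Germ.coe_mul, smul_mul_assoc])
    (fun c x y => by
      refine Filter.Germ.inductionOn₂ x y fun f g => ?_
      simp only [← Filter.Germ.coe_smul, ← Filter.Germ.coe_mul, mul_smul_comm])

/-- The ring of germs at `x` of analytic functions: the subalgebra of the ring of germs
of functions at `x` consisting of germs having an analytic representative. -/
noncomputable def analyticGermsAt {n : ℕ} (x : Fin n → ℂ) :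
    Subalgebra ℂ (Filter.Germ (𝓝 x) ℂ) where
  carrier := {φ | ∃ f : (Fin n → ℂ) → ℂ, AnalyticAt ℂ f x ∧ φ = ↑f}
  mul_mem' := by
    rintro a b ⟨f, hf, rfl⟩ ⟨g, hg, rfl⟩
    exact ⟨f * g, hf.mul hg, rfl⟩
  add_mem' := by
    rintro a b ⟨f, hf, rfl⟩ ⟨g, hg, rfl⟩
    exact ⟨f + g, hf.add hg, rfl⟩
  algebraMap_mem' := fun c => ⟨fun _ => c, analyticAt_const, by
    rw [Algebra.algebraMap_eq_smul_one, ← Filter.Germ.coe_one (l := 𝓝 x),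
      ← Filter.Germ.coe_smul]
    congr 1
    funext z
    simp⟩

/-- The local degree (intersection multiplicity) at `x` of an `n`-tuple `g` of functions
of `n` complex variables: the dimension of the quotient of the ring of germs of analytic
functions at `x` by the ideal generated by the germs of the components of `g`. -/
noncomputable def localDegree {n : ℕ} (g : Fin n → ((Fin n → ℂ) → ℂ)) (x : Fin n → ℂ) : ℕ :=
  Module.finrank ℂ
    (↥(analyticGermsAt x) ⧸ Ideal.span
      {y : ↥(analyticGermsAt x) | ∃ i, (y : Filter.Germ (𝓝 x) ℂ) = ↑(g i)})


/-- The ring `O(S)` of germs of holomorphic functions on (open neighbourhoods of) a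
compact set `S`: the subalgebra of the ring of germs of functions along the neighbourhood
filter of `S` consisting of germs having a representative holomorphic on an open
neighbourhood of `S`. -/
noncomputable def holGermsOn {n : ℕ} (S : Set (Fin n → ℂ)) :
    Subalgebra ℂ (Filter.Germ (𝓝ˢ S) ℂ) where
  carrier := {φ | ∃ f : (Fin n → ℂ) → ℂ, ∃ U : Set (Fin n → ℂ),
    IsOpen U ∧ S ⊆ U ∧ DifferentiableOn ℂ f U ∧ φ = ↑f}
  mul_mem' := by
    rintro a b ⟨f, U, hU, hSU, hf, rfl⟩ ⟨g, W, hW, hSW, hg, rfl⟩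
    exact ⟨f * g, U ∩ W, hU.inter hW, Set.subset_inter hSU hSW,
      (hf.mono Set.inter_subset_left).mul (hg.mono Set.inter_subset_right), rfl⟩
  add_mem' := by
    rintro a b ⟨f, U, hU, hSU, hf, rfl⟩ ⟨g, W, hW, hSW, hg, rfl⟩
    exact ⟨f + g, U ∩ W, hU.inter hW, Set.subset_inter hSU hSW,
      (hf.mono Set.inter_subset_left).add (hg.mono Set.inter_subset_right), rfl⟩
  algebraMap_mem' := fun c => ⟨fun _ => c, Set.univ, isOpen_univ, Set.subset_univ _,
    (differentiable_const c).differentiableOn, by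
      rw [Algebra.algebraMap_eq_smul_one, ← Filter.Germ.coe_one (l := 𝓝ˢ S),
        ← Filter.Germ.coe_smul]
      congr 1
      funext z
      simp⟩

/-- Evaluation of a germ along the neighbourhood filter of `S` at a point of `S`. -/
noncomputable def germValue {n : ℕ} {S : Set (Fin n → ℂ)} {x : Fin n → ℂ} (hx : x ∈ S)
    (φ : Filter.Germ (𝓝ˢ S) ℂ) : ℂ :=
  Filter.Germ.liftOn φ (fun f => f x) fun _f _g hfg => subset_of_mem_nhdsSet hfg hx

@[simp] lemma germValue_coe {n : ℕ} {S : Set (Fin n → ℂ)} {x : Fin n → ℂ} (hx : x ∈ S)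
    (f : (Fin n → ℂ) → ℂ) : germValue hx (↑f) = f x := rfl

lemma germValue_mul {n : ℕ} {S : Set (Fin n → ℂ)} {x : Fin n → ℂ} (hx : x ∈ S)
    (φ ψ : Filter.Germ (𝓝ˢ S) ℂ) :
    germValue hx (φ * ψ) = germValue hx φ * germValue hx ψ :=
  Filter.Germ.inductionOn₂ φ ψ fun _f _g => rfl

lemma germValue_one {n : ℕ} {S : Set (Fin n → ℂ)} {x : Fin n → ℂ} (hx : x ∈ S) :
    germValue hx (1 : Filter.Germ (𝓝ˢ S) ℂ) = 1 := rfl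

/-- The multiplicative set of germs of holomorphic functions not vanishing at a given
point `x ∈ S`; the complement of the prime ideal `p_x`. -/
noncomputable def nonvanishingGerms {n : ℕ} (S : Set (Fin n → ℂ)) {x : Fin n → ℂ}
    (hx : x ∈ S) : Submonoid ↥(holGermsOn S) where
  carrier := {f | germValue hx (f : Filter.Germ (𝓝ˢ S) ℂ) ≠ 0}
  one_mem' := by
    simp only [Set.mem_setOf_eq, OneMemClass.coe_one, germValue_one hx]
    exact one_ne_zero
  mul_mem' := by
    intro a b ha hb
    simp only [Set.mem_setOf_eq, MulMemClass.coe_mul, germValue_mul hx] at *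
    exact mul_ne_zero ha hb

lemma coord_mem_holGermsOn {n : ℕ} (S : Set (Fin n → ℂ)) (i : Fin n) :
    (↑(fun z : Fin n → ℂ => z i) : Filter.Germ (𝓝ˢ S) ℂ) ∈ holGermsOn S :=
  ⟨fun z => z i, Set.univ, isOpen_univ, Set.subset_univ _,
    ((ContinuousLinearMap.proj (R := ℂ) (φ := fun _ : Fin n => ℂ)
      i).differentiable).differentiableOn, rfl⟩

/-- Scalar multiplication by a ring element as a `ℂ`-linear endomorphism of a module over
a commutative `ℂ`-algebra. -/
noncomputable def smulEnd {R : Type*} [CommRing R] [Algebra ℂ R] {L : Type*}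
    [AddCommGroup L] [Module ℂ L] [Module R L] [IsScalarTower ℂ R L] (r : R) :
    Module.End ℂ L where
  toFun x := r • x
  map_add' := smul_add r
  map_smul' c x := by
    show r • (c • x) = c • (r • x)
    rw [← algebraMap_smul R c x, ← algebraMap_smul R c (r • x), smul_smul, smul_smul,
      mul_comm]


/-- Taylor's holomorphic functional calculus for a commuting tuple of bounded operators,
as a unital algebra homomorphism defined on the ring of germs of holomorphic functions on
neighbourhoods of the Taylor spectrum, sending coordinate germs to the members of the
tuple and satisfying the spectral mapping property. -/
structure GermCalculus {n : ℕ} {H : Type*} [NormedAddCommGroup H]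
    [InnerProductSpace ℂ H] [CompleteSpace H] (A : Fin n → (H →L[ℂ] H)) : Type _ where
  toFun : ↥(holGermsOn (opTaylorSpectrum A)) → (H →L[ℂ] H)
  map_one' : toFun 1 = 1
  map_add' : ∀ f g, toFun (f + g) = toFun f + toFun g
  map_mul' : ∀ f g, toFun (f * g) = toFun f * toFun g
  map_algebraMap' : ∀ c : ℂ, toFun (algebraMap ℂ _ c) = algebraMap ℂ _ c
  map_coord : ∀ i, toFun ⟨_, coord_mem_holGermsOn (opTaylorSpectrum A) i⟩ = A i
  commutes : ∀ f i, Commute (A i) (toFun f)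
  spectral_mapping : ∀ (m : ℕ) (h : Fin m → ↥(holGermsOn (opTaylorSpectrum A))),
    opTaylorSpectrum (fun j => toFun (h j)) =
      {mu | ∃ x, ∃ hx : x ∈ opTaylorSpectrum A,
        ∀ j, germValue hx ((h j : Filter.Germ (𝓝ˢ (opTaylorSpectrum A)) ℂ)) = mu j}

/-! For each `i`, the Fitting decomposition `V = V_i(0) ⊕ Q_i` of `A_i` into its generalized
kernel and its stable range is invariant under the commuting tuple, and `A_i` is invertible
on `Q_i`. Since `A_i` acts on the Koszul complex as `d h_i + h_i d`, where `h_i` is exterior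
multiplication by `e_i`, the Koszul complex of `Q_i` is exact, so `H(A, V) ≅ H(A, V_i(0))`.
Induction on the dimension cuts `V` down to `V(0) = ⋂ V_i(0)`. In top degree the last
differential is `x ↦ (±A_i x)_i`, so `H_n(A, V(0))` is the joint kernel of the `A_i`, which is
nonzero as soon as `V(0)` is: commuting operators that are nilpotent on a nonzero invariant
subspace have a common null vector in it. -/

section GenEigenspace

variable {R M : Type*} [CommRing R] [AddCommGroup M] [Module R M]
  {ι : Type*} {B : ι → Module.End R M}

lemma iSup_ker_pow_eq_maxGenEigenspace_zero (T : Module.End R M) :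
    ⨆ p : ℕ, LinearMap.ker (T ^ p) = T.maxGenEigenspace 0 := by
  simp [← Module.End.iSup_genEigenspace_eq, Module.End.genEigenspace_nat]

lemma mapsTo_iInf_range_pow {S T : Module.End R M} (h : Commute S T) :
    ∀ x ∈ ⨅ p : ℕ, LinearMap.range (T ^ p), S x ∈ ⨅ p : ℕ, LinearMap.range (T ^ p) := by
  simp only [Submodule.mem_iInf, LinearMap.mem_range]
  intro x hx p
  obtain ⟨y, rfl⟩ := hx p
  exact ⟨S y, by rw [← Module.End.mul_apply, ← (h.pow_right p).eq, Module.End.mul_apply]⟩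

lemma mapsTo_iInf_maxGenEigenspace {j : ι}
    (hB : ∀ i, Commute (B i) (B j)) (μ : R) :
    ∀ x ∈ ⨅ i, (B i).maxGenEigenspace μ, B j x ∈ ⨅ i, (B i).maxGenEigenspace μ := by
  simp only [Submodule.mem_iInf]
  exact fun x hx i => Module.End.mapsTo_maxGenEigenspace_of_comm (hB i) μ (hx i)

lemma isCompl_maxGenEigenspace_zero_iInf_range_pow [IsNoetherian R M] [IsArtinian R M]
    (T : Module.End R M) :
    IsCompl (T.maxGenEigenspace 0) (⨅ p : ℕ, LinearMap.range (T ^ p)) := by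
  rw [← iSup_ker_pow_eq_maxGenEigenspace_zero]
  exact LinearMap.isCompl_iSup_ker_pow_iInf_range_pow T

lemma inf_ker_ne_bot_of_le_maxGenEigenspace {p : Submodule R M} {T : Module.End R M}
    (hT : ∀ x ∈ p, T x ∈ p) (hp : p ≠ ⊥) (hle : p ≤ T.maxGenEigenspace 0) :
    p ⊓ LinearMap.ker T ≠ ⊥ := by
  have hmap : ∀ {r : Submodule R p}, r.map p.subtype = ⊥ → r = ⊥ := fun h =>
    Submodule.map_injective_of_injective p.injective_subtype (h.trans (Submodule.map_bot _).symm)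
  have hmax : Module.End.maxGenEigenspace (T.restrict hT) 0 ≠ ⊥ := fun h => hp <| by
    rw [← inf_eq_left.2 hle, Submodule.inf_genEigenspace T p hT]
    exact (congrArg _ h).trans (Submodule.map_bot _)
  rw [← Module.End.eigenspace_zero, Submodule.inf_genEigenspace T p hT]
  exact fun h => Module.End.HasUnifEigenvalue.lt zero_lt_one hmax (hmap h)

lemma inf_iInf_ker_ne_bot (hB : ∀ i j, Commute (B i) (B j)) (t : Finset ι) :
    ∀ p : Submodule R M, (∀ i, ∀ x ∈ p, B i x ∈ p) → p ≠ ⊥ →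
      p ≤ ⨅ i, (B i).maxGenEigenspace 0 → p ⊓ ⨅ i ∈ t, LinearMap.ker (B i) ≠ ⊥ := by
  classical
  induction t using Finset.induction_on with
  | empty => simpa using fun p _ hp _ => hp
  | insert j t _ ih =>
    intro p hinv hp hle
    have hinv' : ∀ i, ∀ x ∈ p ⊓ LinearMap.ker (B j), B i x ∈ p ⊓ LinearMap.ker (B j) :=
      fun i x hx => ⟨hinv i x hx.1, by
        rw [SetLike.mem_coe, LinearMap.mem_ker, ← Module.End.mul_apply, (hB j i).eq,
          Module.End.mul_apply, LinearMap.mem_ker.1 hx.2, map_zero]⟩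
    have := ih _ hinv' (inf_ker_ne_bot_of_le_maxGenEigenspace (hinv j) hp
      (hle.trans (iInf_le _ j))) (inf_le_left.trans hle)
    rwa [Finset.iInf_insert, ← inf_assoc]

theorem iInf_ker_ne_bot_of_iInf_maxGenEigenspace_ne_bot [Finite ι]
    (hB : ∀ i j, Commute (B i) (B j)) (h : ⨅ i, (B i).maxGenEigenspace 0 ≠ ⊥) :
    ⨅ i, LinearMap.ker (B i) ≠ ⊥ := by
  cases nonempty_fintype ι
  have := inf_iInf_ker_ne_bot hB Finset.univ _
    (fun j => mapsTo_iInf_maxGenEigenspace (fun i => hB i j) 0) h le_rfl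
  simp only [Finset.mem_univ, iInf_pos] at this
  exact fun h0 => this (by rw [h0, inf_bot_eq])

end GenEigenspace

section RestrictEnd

lemma restrictEnd_of_mapsTo {p : Submodule ℂ V} {T : Module.End ℂ V} (h : ∀ x ∈ p, T x ∈ p) :
    restrictEnd p T = T.restrict h :=
  dif_pos h

lemma subtype_comp_restrictEnd {p : Submodule ℂ V} {T : Module.End ℂ V}
    (h : ∀ x ∈ p, T x ∈ p) : p.subtype ∘ₗ restrictEnd p T = T ∘ₗ p.subtype := by
  rw [restrictEnd_of_mapsTo h, LinearMap.subtype_comp_restrict]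
  rfl

lemma projectionOnto_comp_of_mapsTo {p q : Submodule ℂ V} (hpq : IsCompl p q)
    {T : Module.End ℂ V} (hp : ∀ x ∈ p, T x ∈ p) (hq : ∀ x ∈ q, T x ∈ q) :
    p.projectionOnto q hpq ∘ₗ T = restrictEnd p T ∘ₗ p.projectionOnto q hpq := by
  ext x
  rw [LinearMap.comp_apply, LinearMap.comp_apply, restrictEnd_of_mapsTo hp,
    LinearMap.coe_restrict_apply]
  conv_lhs => rw [← Submodule.projection_add_projection_eq_self hpq x]
  rw [map_add, map_add, Submodule.projectionOnto_apply_of_mem_left hpq (hp _ (by simp)),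
    Submodule.projectionOnto_apply_of_mem_right hpq (hq _ (by simp)), add_zero]
  rfl

lemma restrictEnd_commute {p : Submodule ℂ V} {S T : Module.End ℂ V} (hST : Commute S T)
    (hS : ∀ x ∈ p, S x ∈ p) (hT : ∀ x ∈ p, T x ∈ p) :
    Commute (restrictEnd p S) (restrictEnd p T) := by
  rw [restrictEnd_of_mapsTo hS, restrictEnd_of_mapsTo hT]
  ext x
  exact LinearMap.congr_fun hST.eq x

lemma maxGenEigenspace_restrictEnd {p : Submodule ℂ V} {T : Module.End ℂ V}
    (h : ∀ x ∈ p, T x ∈ p) (μ : ℂ) :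
    (restrictEnd p T).maxGenEigenspace μ = (T.maxGenEigenspace μ).comap p.subtype := by
  rw [restrictEnd_of_mapsTo h]
  exact Module.End.genEigenspace_restrict T p ⊤ μ h

lemma bijective_restrictEnd_iInf_range_pow [FiniteDimensional ℂ V] (T : Module.End ℂ V) :
    Function.Bijective (restrictEnd (⨅ p : ℕ, LinearMap.range (T ^ p)) T) := by
  have hT := mapsTo_iInf_range_pow (Commute.refl T)
  rw [restrictEnd_of_mapsTo hT]
  have hinj : Function.Injective (T.restrict hT) := by
    rw [← LinearMap.ker_eq_bot, eq_bot_iff]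
    intro x hx
    have hK : (x : V) ∈ T.maxGenEigenspace 0 :=
      (Module.End.mem_maxGenEigenspace _ _ _).2 ⟨1, by simpa using congrArg Subtype.val hx⟩
    exact (Submodule.mem_bot ℂ).2 (Subtype.ext (Submodule.disjoint_def.1
      (isCompl_maxGenEigenspace_zero_iInf_range_pow T).disjoint _ hK x.2))
  exact ⟨hinj, LinearMap.injective_iff_surjective.1 hinj⟩

lemma ker_restrictEnd {p : Submodule ℂ V} {T : Module.End ℂ V} (h : ∀ x ∈ p, T x ∈ p) :
    LinearMap.ker (restrictEnd p T) = (LinearMap.ker T).comap p.subtype := by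
  rw [restrictEnd_of_mapsTo h, LinearMap.ker_restrict]

end RestrictEnd

section Functoriality

variable {W : Type*} [AddCommGroup W] [Module ℂ W] {n : ℕ}
  {A : Fin n → Module.End ℂ V} {B : Fin n → Module.End ℂ W}

lemma compLeft_comp_koszulD (φ : V →ₗ[ℂ] W) (hφ : ∀ i, φ ∘ₗ A i = B i ∘ₗ φ) (k : ℕ) :
    φ.compLeft _ ∘ₗ koszulD A k = koszulD B k ∘ₗ φ.compLeft _ := by
  ext f s
  simp only [LinearMap.comp_apply, LinearMap.compLeft_apply, Function.comp_apply, koszulD,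
    LinearMap.coe_mk, AddHom.coe_mk, map_sum, map_smul]
  exact Finset.sum_congr rfl fun j _ => by rw [← LinearMap.comp_apply φ, hφ, LinearMap.comp_apply]

lemma compLeft_comp_koszulDDown (φ : V →ₗ[ℂ] W) (hφ : ∀ i, φ ∘ₗ A i = B i ∘ₗ φ) (k : ℕ) :
    φ.compLeft _ ∘ₗ koszulDDown A k = koszulDDown B k ∘ₗ φ.compLeft _ := by
  cases k with
  | zero => ext; simp [koszulDDown]
  | succ k => exact compLeft_comp_koszulD φ hφ k

lemma compLeft_mem_ker_koszulDDown (φ : V →ₗ[ℂ] W) (hφ : ∀ i, φ ∘ₗ A i = B i ∘ₗ φ) {k : ℕ}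
    {x : {s : Finset (Fin n) // s.card = k} → V} (hx : x ∈ LinearMap.ker (koszulDDown A k)) :
    φ.compLeft _ x ∈ LinearMap.ker (koszulDDown B k) := by
  rw [LinearMap.mem_ker] at hx ⊢
  rw [← LinearMap.comp_apply, ← compLeft_comp_koszulDDown φ hφ, LinearMap.comp_apply, hx,
    map_zero]

lemma compLeft_mem_range_koszulD (φ : V →ₗ[ℂ] W) (hφ : ∀ i, φ ∘ₗ A i = B i ∘ₗ φ) {k : ℕ}
    {x : {s : Finset (Fin n) // s.card = k} → V} (hx : x ∈ LinearMap.range (koszulD A k)) :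
    φ.compLeft _ x ∈ LinearMap.range (koszulD B k) := by
  obtain ⟨y, rfl⟩ := hx
  exact ⟨φ.compLeft _ y, by rw [← LinearMap.comp_apply, ← compLeft_comp_koszulD φ hφ]; rfl⟩

noncomputable def koszulHomologyMap (φ : V →ₗ[ℂ] W) (hφ : ∀ i, φ ∘ₗ A i = B i ∘ₗ φ) (k : ℕ) :
    koszulHomology A k →ₗ[ℂ] koszulHomology B k :=
  Submodule.mapQ _ _ ((φ.compLeft _).restrict fun _ => compLeft_mem_ker_koszulDDown φ hφ)
    fun _ => compLeft_mem_range_koszulD φ hφ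

noncomputable def koszulHomologyCongr (e : V ≃ₗ[ℂ] W)
    (he : ∀ i, e.toLinearMap ∘ₗ A i = B i ∘ₗ e.toLinearMap) (k : ℕ) :
    koszulHomology A k ≃ₗ[ℂ] koszulHomology B k :=
  have he' : ∀ i, e.symm.toLinearMap ∘ₗ B i = A i ∘ₗ e.symm.toLinearMap := fun i => by
    rw [LinearEquiv.eq_comp_toLinearMap_symm, LinearMap.comp_assoc, ← he,
      ← LinearMap.comp_assoc, LinearEquiv.symm_comp, LinearMap.id_comp]
  LinearEquiv.ofLinearMap (koszulHomologyMap e he k) (koszulHomologyMap e.symm he' k)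
    (by ext x; exact congrArg Submodule.Quotient.mk (Subtype.ext (funext fun s =>
      e.apply_symm_apply (x.1 s))))
    (by ext x; exact congrArg Submodule.Quotient.mk (Subtype.ext (funext fun s =>
      e.symm_apply_apply (x.1 s))))

end Functoriality

section Homotopy

variable {n : ℕ}

def koszulSign (s : Finset (Fin n)) (j : Fin n) : ℂ :=
  (-1) ^ (s.filter (· < j)).card

lemma koszulSign_mul_self (s : Finset (Fin n)) (j : Fin n) :
    koszulSign s j * koszulSign s j = 1 := by
  rw [koszulSign, ← pow_add, Even.neg_one_pow ⟨_, rfl⟩]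

lemma koszulSign_insert_mul_add {e : Finset (Fin n)} {i j : Fin n} (hi : i ∉ e) (hj : j ∉ e)
    (hij : j ≠ i) :
    koszulSign (insert i e) j * koszulSign (insert j e) i + koszulSign e i * koszulSign e j
      = 0 := by
  simp only [koszulSign, Finset.filter_insert]
  rcases hij.lt_or_gt with hlt | hlt
  · rw [if_neg (asymm hlt), if_pos hlt,
      Finset.card_insert_of_notMem fun h => hj (Finset.mem_filter.mp h).1, pow_succ]
    ring
  · rw [if_pos hlt, if_neg (asymm hlt),
      Finset.card_insert_of_notMem fun h => hi (Finset.mem_filter.mp h).1, pow_succ]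
    ring

def extendByZero {M : Type*} [Zero M] {k : ℕ} (f : {s : Finset (Fin n) // s.card = k} → M)
    (t : Finset (Fin n)) : M :=
  if h : t.card = k then f ⟨t, h⟩ else 0

lemma extendByZero_of_card {M : Type*} [Zero M] {k : ℕ} (f : {s : Finset (Fin n) // s.card = k} → M)
    {t : Finset (Fin n)} (h : t.card = k) : extendByZero f t = f ⟨t, h⟩ :=
  dif_pos h

lemma extendByZero_zero {M : Type*} [Zero M] {k : ℕ} :
    extendByZero (0 : {s : Finset (Fin n) // s.card = k} → M) = 0 :=
  funext fun _ => dite_eq_right_iff.2 fun _ => rfl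

lemma koszulD_apply (A : Fin n → Module.End ℂ V) {k : ℕ}
    (f : {s : Finset (Fin n) // s.card = k + 1} → V) (s : {s : Finset (Fin n) // s.card = k}) :
    koszulD A k f s =
      ∑ j ∈ (s : Finset (Fin n))ᶜ, koszulSign s j • A j (extendByZero f (insert j s)) := by
  rw [← Finset.sum_attach]
  refine Finset.sum_congr rfl fun j _ => ?_
  rw [extendByZero_of_card]
  rfl

/-- Exterior multiplication by the `i`-th basis vector of `Λ(ℂⁿ)`, on cochains extended by
zero. -/
def wedge (i : Fin n) (F : Finset (Fin n) → V) (t : Finset (Fin n)) : V :=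
  if i ∈ t then koszulSign (t.erase i) i • F (t.erase i) else 0

lemma wedge_zero (i : Fin n) : wedge i (0 : Finset (Fin n) → V) = 0 :=
  funext fun _ => ite_eq_right_iff.2 fun _ => smul_zero _

lemma extendByZero_wedge (i : Fin n) {k : ℕ} (f : {s : Finset (Fin n) // s.card = k} → V) :
    extendByZero (k := k + 1) (fun t => wedge i (extendByZero f) t) = wedge i (extendByZero f) := by
  funext t
  by_cases ht : t.card = k + 1
  · exact extendByZero_of_card _ ht
  · rw [extendByZero, dif_neg ht, wedge]
    split_ifs with hi
    · rw [extendByZero, dif_neg (show (t.erase i).card ≠ k by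
      have := Finset.card_erase_add_one hi; omega), smul_zero]
    · rfl

lemma koszulD_wedge_of_notMem (B : Fin n → Module.End ℂ V) (i : Fin n) {k : ℕ}
    (f : {s : Finset (Fin n) // s.card = k} → V) (s : {s : Finset (Fin n) // s.card = k})
    (hi : i ∉ (s : Finset (Fin n))) :
    koszulD B k (fun t => wedge i (extendByZero f) t) s = B i (f s) := by
  rw [koszulD_apply, extendByZero_wedge, Finset.sum_eq_single_of_mem i (Finset.mem_compl.2 hi)]
  · rw [wedge, if_pos (Finset.mem_insert_self _ _), Finset.erase_insert hi, map_smul, smul_smul,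
      koszulSign_mul_self, one_smul, extendByZero_of_card f s.2]
  · intro j _ hji
    rw [wedge, if_neg (by simp [Ne.symm hji, hi]), map_zero, smul_zero]

lemma koszulD_wedge_add_wedge_koszulD_of_mem (B : Fin n → Module.End ℂ V) (i : Fin n) {m : ℕ}
    (f : {s : Finset (Fin n) // s.card = m + 1} → V) (s : {s : Finset (Fin n) // s.card = m + 1})
    (hi : i ∈ (s : Finset (Fin n))) :
    koszulD B (m + 1) (fun t => wedge i (extendByZero f) t) s
      + wedge i (extendByZero (koszulD B m f)) s = B i (f s) := by
  have hs : insert i ((s : Finset (Fin n)).erase i) = s := Finset.insert_erase hi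
  have he : ((s : Finset (Fin n)).erase i).card = m := by
    rw [Finset.card_erase_of_mem hi, s.2]; rfl
  rw [koszulD_apply, extendByZero_wedge, wedge, if_pos hi, extendByZero_of_card _ he,
    koszulD_apply, Finset.compl_erase, Finset.sum_insert (by simp [hi]), smul_add,
    add_left_comm, Finset.smul_sum, ← Finset.sum_add_distrib]
  simp only [smul_smul, koszulSign_mul_self, one_smul, hs, extendByZero_of_card f s.2]
  rw [Finset.sum_eq_zero, add_zero]
  intro j hj
  have hjs : j ∉ (s : Finset (Fin n)) := Finset.mem_compl.1 hj
  have hji : j ≠ i := fun h => hjs (h ▸ hi)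
  have hsign := koszulSign_insert_mul_add (Finset.notMem_erase i (s : Finset (Fin n)))
    (fun h => hjs (Finset.mem_of_mem_erase h)) hji
  rw [hs] at hsign
  rw [wedge, if_pos (Finset.mem_insert_of_mem hi), Finset.erase_insert_of_ne hji, map_smul,
    smul_smul, ← add_smul, hsign, zero_smul]

lemma koszulD_wedge_add_wedge_koszulDDown (B : Fin n → Module.End ℂ V) (i : Fin n) {k : ℕ}
    (f : {s : Finset (Fin n) // s.card = k} → V) (s : {s : Finset (Fin n) // s.card = k}) :
    koszulD B k (fun t => wedge i (extendByZero f) t) s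
      + wedge i (extendByZero (koszulDDown B k f)) s = B i (f s) := by
  by_cases hi : i ∈ (s : Finset (Fin n))
  · cases k with
    | zero => simp [Finset.card_eq_zero.1 s.2] at hi
    | succ m => exact koszulD_wedge_add_wedge_koszulD_of_mem B i f s hi
  · rw [koszulD_wedge_of_notMem B i f s hi, wedge, if_neg hi, add_zero]

theorem mem_range_koszulD_of_bijective {B : Fin n → Module.End ℂ V} {i : Fin n}
    (hB : ∀ j, Commute (B i) (B j)) (hbij : Function.Bijective (B i)) {k : ℕ}
    {x : {s : Finset (Fin n) // s.card = k} → V} (hx : x ∈ LinearMap.ker (koszulDDown B k)) :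
    x ∈ LinearMap.range (koszulD B k) := by
  obtain ⟨u, hu⟩ := (Module.End.isUnit_iff (B i)).2 hbij
  set φ : Module.End ℂ V := ↑u⁻¹
  have hφ : ∀ j, φ ∘ₗ B j = B j ∘ₗ φ := fun j => (Commute.units_inv_left (hu ▸ hB j)).eq
  have hBφ : ∀ v, B i (φ v) = v := fun v => by
    rw [← hu]; exact LinearMap.congr_fun u.mul_inv v
  have hdx : koszulDDown B k (φ.compLeft _ x) = 0 := by
    rw [← LinearMap.comp_apply, ← compLeft_comp_koszulDDown φ hφ, LinearMap.comp_apply,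
      LinearMap.mem_ker.1 hx, map_zero]
  refine ⟨fun t => wedge i (extendByZero (φ.compLeft _ x)) t, funext fun s => ?_⟩
  have h := koszulD_wedge_add_wedge_koszulDDown B i (φ.compLeft _ x) s
  rwa [hdx, extendByZero_zero, wedge_zero, Pi.zero_apply, add_zero, LinearMap.compLeft_apply,
    Function.comp_apply, hBφ] at h

end Homotopy

section TopDegree

variable {n : ℕ}

instance : Subsingleton {s : Finset (Fin n) // s.card = n} :=
  ⟨fun s t => Subtype.ext <| by
    rw [Finset.eq_univ_of_card s.1 (by simp [s.2]), Finset.eq_univ_of_card t.1 (by simp [t.2])]⟩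

instance : IsEmpty {s : Finset (Fin n) // s.card = n + 1} :=
  ⟨fun s => by have := s.1.card_le_univ; simp [s.2] at this⟩

def topFace : {s : Finset (Fin n) // s.card = n} := ⟨Finset.univ, by simp⟩

lemma range_koszulD_top (B : Fin n → Module.End ℂ V) : LinearMap.range (koszulD B n) = ⊥ := by
  rw [LinearMap.range_eq_bot, Subsingleton.elim (koszulD B n) 0]

lemma mem_ker_koszulDDown_top_iff (B : Fin n → Module.End ℂ V)
    (x : {s : Finset (Fin n) // s.card = n} → V) :
    x ∈ LinearMap.ker (koszulDDown B n) ↔ ∀ i, B i (x topFace) = 0 := by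
  cases n with
  | zero => simp [koszulDDown]
  | succ m =>
    have hx : ∀ s : {s : Finset (Fin (m + 1)) // s.card = m}, ∀ j ∈ (s : Finset _)ᶜ,
        extendByZero x (insert j s) = x topFace := fun s j hj => by
      rw [extendByZero_of_card x
        (by rw [Finset.card_insert_of_notMem (Finset.mem_compl.1 hj), s.2])]
      exact congrArg x (Subsingleton.elim _ _)
    simp only [koszulDDown, LinearMap.mem_ker, funext_iff, Pi.zero_apply, koszulD_apply]
    constructor
    · intro h i
      have hs : (Finset.univ.erase i).card = m := by simp
      have hc : (Finset.univ.erase i)ᶜ = {i} := by ext; simp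
      have := h ⟨_, hs⟩
      rw [hc, Finset.sum_singleton, hx ⟨_, hs⟩ i (by simp [hc])] at this
      exact (smul_eq_zero.1 this).resolve_left (by simp [koszulSign])
    · intro h s
      exact Finset.sum_eq_zero fun j hj => by rw [hx s j hj, h, smul_zero]

noncomputable def koszulHomologyTopEquiv (B : Fin n → Module.End ℂ V) :
    koszulHomology B n ≃ₗ[ℂ] ↥(⨅ i, LinearMap.ker (B i)) :=
  (Submodule.quotEquivOfEqBot _ (by
      rw [range_koszulD_top, Submodule.comap_bot, Submodule.ker_subtype])).trans
    { toFun := fun x => ⟨x.1 topFace, Submodule.mem_iInf _ |>.2 fun i =>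
        (mem_ker_koszulDDown_top_iff B x.1).1 x.2 i⟩
      map_add' := fun _ _ => rfl
      map_smul' := fun _ _ => rfl
      invFun := fun y => ⟨fun _ => y, (mem_ker_koszulDDown_top_iff B _).2 fun i =>
        (Submodule.mem_iInf _).1 y.2 i⟩
      left_inv := fun x => Subtype.ext (funext fun _ => congrArg x.1 (Subsingleton.elim _ _))
      right_inv := fun _ => rfl }

noncomputable def koszulHomologyTopRestrictEndEquiv {B : Fin n → Module.End ℂ V}
    {p : Submodule ℂ V} (hp : ∀ i, ∀ x ∈ p, B i x ∈ p) (hle : ⨅ i, LinearMap.ker (B i) ≤ p) :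
    koszulHomology (fun i => restrictEnd p (B i)) n ≃ₗ[ℂ] ↥(⨅ i, LinearMap.ker (B i)) :=
  (koszulHomologyTopEquiv _).trans <| (LinearEquiv.ofEq _ _ <| by
    simp only [ker_restrictEnd (hp _), Submodule.comap_iInf]).trans
      (Submodule.comapSubtypeEquivOfLe hle)

end TopDegree

section Reduction

variable {n : ℕ}

noncomputable def koszulHomologyEquivOfIsCompl {B : Fin n → Module.End ℂ V}
    {p q : Submodule ℂ V} (hp : ∀ i, ∀ x ∈ p, B i x ∈ p)
    (hq : ∀ i, ∀ x ∈ q, B i x ∈ q) (hpq : IsCompl p q) {k : ℕ}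
    (hexact : ∀ x ∈ LinearMap.ker (koszulDDown (fun i => restrictEnd q (B i)) k),
      x ∈ LinearMap.range (koszulD (fun i => restrictEnd q (B i)) k)) :
    koszulHomology (fun i => restrictEnd p (B i)) k ≃ₗ[ℂ] koszulHomology B k :=
  LinearEquiv.ofLinearMap
    (koszulHomologyMap p.subtype (fun i => subtype_comp_restrictEnd (hp i)) k)
    (koszulHomologyMap (p.projectionOnto q hpq)
      (fun i => projectionOnto_comp_of_mapsTo hpq (hp i) (hq i)) k)
    (by
      ext x
      refine (Submodule.Quotient.eq _).2 ?_
      obtain ⟨y, hy⟩ := hexact _ (compLeft_mem_ker_koszulDDown (q.projectionOnto p hpq.symm)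
        (fun i => projectionOnto_comp_of_mapsTo hpq.symm (hq i) (hp i)) x.2)
      refine ⟨-q.subtype.compLeft _ y, funext fun s => ?_⟩
      rw [map_neg, ← LinearMap.comp_apply, ← compLeft_comp_koszulD q.subtype
        (fun i => subtype_comp_restrictEnd (hq i)), LinearMap.comp_apply, hy]
      change -(q.projectionOnto p hpq.symm (x.1 s) : V) = p.projectionOnto q hpq (x.1 s) - x.1 s
      rw [neg_eq_iff_eq_neg, neg_sub]
      exact Submodule.projection_eq_self_sub_projection hpq (x.1 s))
    (by
      ext x
      exact congrArg Submodule.Quotient.mk (Subtype.ext (funext fun s =>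
        Submodule.projectionOnto_apply_left hpq (x.1 s))))

noncomputable def koszulHomologyRestrictEndTopEquiv (B : Fin n → Module.End ℂ V) (k : ℕ) :
    koszulHomology B k ≃ₗ[ℂ] koszulHomology (fun i => restrictEnd ⊤ (B i)) k :=
  koszulHomologyCongr Submodule.topEquiv.symm (fun i => by
    rw [restrictEnd_of_mapsTo fun x _ => Submodule.mem_top]
    rfl) k

noncomputable def koszulHomologyRestrictEndComapEquiv {B : Fin n → Module.End ℂ V}
    {p r : Submodule ℂ V} (hp : ∀ i, ∀ x ∈ p, B i x ∈ p) (hr : ∀ i, ∀ x ∈ r, B i x ∈ r)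
    (hrp : r ≤ p) (k : ℕ) :
    koszulHomology (fun i => restrictEnd (r.comap p.subtype) (restrictEnd p (B i))) k ≃ₗ[ℂ]
      koszulHomology (fun i => restrictEnd r (B i)) k :=
  koszulHomologyCongr (Submodule.comapSubtypeEquivOfLe hrp) (fun i => by
    have hr' : ∀ x ∈ r.comap p.subtype, restrictEnd p (B i) x ∈ r.comap p.subtype := by
      rw [restrictEnd_of_mapsTo (hp i)]
      exact fun x hx => hr i x hx
    rw [restrictEnd_of_mapsTo hr', restrictEnd_of_mapsTo (hr i)]
    ext x
    change restrictEnd p (B i) x.1 = B i x.1.1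
    rw [restrictEnd_of_mapsTo (hp i)]
    rfl) k

theorem nonempty_koszulHomology_equiv_restrictEnd_iInf_maxGenEigenspace {W : Type*}
    [AddCommGroup W] [Module ℂ W] [FiniteDimensional ℂ W] (B : Fin n → Module.End ℂ W)
    (hB : ∀ i j, Commute (B i) (B j)) (k : ℕ) :
    Nonempty (koszulHomology B k ≃ₗ[ℂ]
      koszulHomology (fun i => restrictEnd (⨅ j, (B j).maxGenEigenspace 0) (B i)) k) := by
  induction hd : Module.finrank ℂ W using Nat.strong_induction_on generalizing W with
  | _ d ih =>
  by_cases htop : ∀ i, (B i).maxGenEigenspace 0 = ⊤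
  · rw [iInf_eq_top.2 htop]
    exact ⟨koszulHomologyRestrictEndTopEquiv B k⟩
  push Not at htop
  obtain ⟨i₀, hi₀⟩ := htop
  set K := (B i₀).maxGenEigenspace 0
  set Q := ⨅ p : ℕ, LinearMap.range (B i₀ ^ p)
  have hK : ∀ i, ∀ x ∈ K, B i x ∈ K := fun i =>
    Module.End.mapsTo_maxGenEigenspace_of_comm (hB i₀ i) 0
  have hQ : ∀ i, ∀ x ∈ Q, B i x ∈ Q := fun i => mapsTo_iInf_range_pow (hB i i₀)
  have e₁ := koszulHomologyEquivOfIsCompl hK hQ (isCompl_maxGenEigenspace_zero_iInf_range_pow _)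
    (k := k) fun x hx => mem_range_koszulD_of_bijective
      (fun j => restrictEnd_commute (hB i₀ j) (hQ i₀) (hQ j))
      (bijective_restrictEnd_iInf_range_pow (B i₀)) hx
  obtain ⟨e₂⟩ := ih _ (hd ▸ Submodule.finrank_lt hi₀) (fun i => restrictEnd K (B i))
    (fun i j => restrictEnd_commute (hB i j) (hK i) (hK j)) rfl
  have hV0 : ⨅ i, (restrictEnd K (B i)).maxGenEigenspace 0 =
      (⨅ i, (B i).maxGenEigenspace 0).comap K.subtype := by
    simp only [maxGenEigenspace_restrictEnd (hK _), Submodule.comap_iInf]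
  rw [hV0] at e₂
  exact ⟨e₁.symm.trans (e₂.trans (koszulHomologyRestrictEndComapEquiv hK
    (fun i => mapsTo_iInf_maxGenEigenspace (fun j => hB j i) 0) (iInf_le _ i₀) k))⟩

end Reduction

/-- **Koszul homology of a commuting tuple on a finite dimensional space.** For a
commuting tuple `A` on a finite dimensional complex vector space `V`, with `V(0)` the
joint generalized eigenspace of `A` at `0`, the homology `H_k(A, V)` is isomorphic to
`H_k(A, V(0))` for every `k`; moreover `H_n(A, V(0)) ≅ ∩ᵢ Ker(A_i)`, and this space is
nonzero if and only if `V(0) ≠ 0`. -/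
theorem homology_concentrated_on_generalized_eigenspace
    {V : Type*} [AddCommGroup V] [Module ℂ V] [FiniteDimensional ℂ V] {n : ℕ}
    (A : Fin n → Module.End ℂ V) (hA : ∀ i j, Commute (A i) (A j)) :
    (∀ k, Nonempty (koszulHomology A k ≃ₗ[ℂ]
      koszulHomology
        (fun i => restrictEnd (⨅ i', ⨆ p : ℕ, LinearMap.ker (A i' ^ p)) (A i)) k)) ∧
    Nonempty (koszulHomology
        (fun i => restrictEnd (⨅ i', ⨆ p : ℕ, LinearMap.ker (A i' ^ p)) (A i)) n ≃ₗ[ℂ]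
      ↥(⨅ i, LinearMap.ker (A i))) ∧
    (Nontrivial (koszulHomology
        (fun i => restrictEnd (⨅ i', ⨆ p : ℕ, LinearMap.ker (A i' ^ p)) (A i)) n) ↔
      (⨅ i', ⨆ p : ℕ, LinearMap.ker (A i' ^ p)) ≠ ⊥) := by
  rw [show (⨅ i', ⨆ p : ℕ, LinearMap.ker (A i' ^ p)) = ⨅ i, (A i).maxGenEigenspace 0 by
    simp only [iSup_ker_pow_eq_maxGenEigenspace_zero]]
  have hle : ⨅ i, LinearMap.ker (A i) ≤ ⨅ i, (A i).maxGenEigenspace 0 := iInf_mono fun i =>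
    (Module.End.eigenspace_zero (A i)).symm.le.trans Module.End.eigenspace_le_maxGenEigenspace
  have e := koszulHomologyTopRestrictEndEquiv
    (fun i => mapsTo_iInf_maxGenEigenspace (fun j => hA j i) 0) hle
  refine ⟨nonempty_koszulHomology_equiv_restrictEnd_iInf_maxGenEigenspace A hA, ⟨e⟩, ?_⟩
  rw [e.toEquiv.nontrivial_congr, Submodule.nontrivial_iff_ne_bot]
  exact ⟨fun h h0 => h (eq_bot_iff.2 (hle.trans h0.le)),
    iInf_ker_ne_bot_of_iInf_maxGenEigenspace_ne_bot hA⟩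

end KN
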